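/- arXiv:dg-ga/9501005 — 2 statements merged into one kernel-verified Lean document; each statement's English description precedes it below -/
import Mathlib

section
/- Let $p:\widetilde M\twoheadrightarrow M$ be a finite geodesic covering of manifolds with linear connections. Then $(\widetilde M,\widetilde\nabla)$ is pseudoconvex if and only if $(M,\nabla)$ is pseudoconvex. -/
/-- An abstract structure recording the geodesics of a manifold with linear connection. -/
structure GeodesicStructure (M : Type*) [TopologicalSpace M] where
  IsGeodesic : (ℝ → M) → Prop

/-- Pseudoconvexity: for every compact `K` there is a compact `K'` containing every
geodesic segment with both endpoints in `K`. -/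
def GeodesicStructure.Pseudoconvex {M : Type*} [TopologicalSpace M]
    (G : GeodesicStructure M) : Prop :=
  ∀ K : Set M, IsCompact K → ∃ K' : Set M, IsCompact K' ∧
    ∀ γ : ℝ → M, ∀ a b : ℝ, G.IsGeodesic γ → a ≤ b → γ a ∈ K → γ b ∈ K →
      ∀ t ∈ Set.Icc a b, γ t ∈ K'

/-- A geodesic covering: a (surjective) covering map which projects geodesics of the
covering space onto geodesics of the base, and along which every geodesic of the
base lifts to a geodesic of the covering space through any point of the fiber. -/
def IsGeodesicCovering {M' M : Type*} [TopologicalSpace M'] [TopologicalSpace M]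
    (p : M' → M) (G' : GeodesicStructure M') (G : GeodesicStructure M) : Prop :=
  IsCoveringMap p ∧ Function.Surjective p ∧
    (∀ γ : ℝ → M', G'.IsGeodesic γ → G.IsGeodesic (p ∘ γ)) ∧
    (∀ γ : ℝ → M, G.IsGeodesic γ → ∀ x : M', p x = γ 0 →
      ∃ γ' : ℝ → M', G'.IsGeodesic γ' ∧ p ∘ γ' = γ ∧ γ' 0 = x)

open Set

/-- A covering map with finite fibers is proper: preimages of compact sets are compact. -/
lemma IsCoveringMap.isCompact_preimage_of_finite_fibers
    {M' M : Type*} [TopologicalSpace M'] [TopologicalSpace M]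
    {p : M' → M} (hp : IsCoveringMap p) (hfin : ∀ x : M, (p ⁻¹' {x}).Finite)
    {K : Set M} (hK : IsCompact K) : IsCompact (p ⁻¹' K) := by
  classical
  rw [isCompact_iff_finite_subcover]
  intro ι U hU hcover
  have key : ∀ x ∈ K, ∃ V : Set M, IsOpen V ∧ x ∈ V ∧
      ∃ s : Finset ι, p ⁻¹' V ⊆ ⋃ i ∈ s, U i := by
    intro x hx
    rcases isEmpty_or_nonempty ↥(p ⁻¹' {x}) with hemp | hne
    · obtain ⟨-, U', hxU', hU', -, H, -⟩ := hp x
      refine ⟨U', hU', hxU', ∅, fun y hy => ?_⟩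
      exact (hemp.false (H ⟨y, hy⟩).2).elim
    obtain ⟨t, hxt⟩ : ∃ t : Bundle.Trivialization (p ⁻¹' {x}) p, x ∈ t.baseSet :=
      ⟨_, (hp x).mem_toTrivialization_baseSet⟩
    haveI : Finite ↥(p ⁻¹' {x}) := (hfin x).to_subtype
    haveI : Fintype ↥(p ⁻¹' {x}) := Fintype.ofFinite _
    have hy : ∀ i : ↥(p ⁻¹' {x}), p (t.toOpenPartialHomeomorph.symm (x, i)) = x := fun i =>
      t.proj_symm_apply (t.mem_target.2 hxt)
    have hyK : ∀ i : ↥(p ⁻¹' {x}), t.toOpenPartialHomeomorph.symm (x, i) ∈ p ⁻¹' K := fun i => by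
      simp only [mem_preimage, hy i]; exact hx
    choose idx hidx using fun i : ↥(p ⁻¹' {x}) => mem_iUnion.1 (hcover (hyK i))
    set A : ↥(p ⁻¹' {x}) → Set M := fun i =>
      (fun v => (v, i)) ⁻¹'
        (t.toOpenPartialHomeomorph.target ∩ t.toOpenPartialHomeomorph.symm ⁻¹' (U (idx i))) with hA
    have hAopen : ∀ i, IsOpen (A i) := fun i =>
      (t.toOpenPartialHomeomorph.isOpen_inter_preimage_symm (hU (idx i))).preimage
        (continuous_id.prodMk continuous_const)
    have hxA : ∀ i, x ∈ A i := fun i => ⟨t.mem_target.2 hxt, hidx i⟩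
    refine ⟨t.baseSet ∩ ⋂ i, A i, t.open_baseSet.inter (isOpen_iInter_of_finite hAopen),
      ⟨hxt, mem_iInter.2 hxA⟩, Finset.univ.image idx, ?_⟩
    intro y hy'
    obtain ⟨hyb, hyA⟩ := hy'
    have hys : y ∈ t.source := t.mem_source.2 hyb
    set j : ↥(p ⁻¹' {x}) := (t y).2 with hj
    have hty : t y = (p y, j) := Prod.ext (t.coe_fst hys) rfl
    obtain ⟨-, hU'⟩ : p y ∈ A j := mem_iInter.1 hyA j
    have hgy : t.toOpenPartialHomeomorph.symm (p y, j) = y := by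
      rw [← hty]; exact t.toOpenPartialHomeomorph.left_inv hys
    rw [mem_iUnion₂]
    exact ⟨idx j, Finset.mem_image_of_mem _ (Finset.mem_univ j), by
      have h2 : t.toOpenPartialHomeomorph.symm (p y, j) ∈ U (idx j) := hU'
      rwa [hgy] at h2⟩
  choose! V hVopen hVmem T hT using key
  obtain ⟨s, hsK, hs⟩ := hK.elim_nhds_subcover V
    (fun x hx => (hVopen x hx).mem_nhds (hVmem x hx))
  refine ⟨s.biUnion T, ?_⟩
  intro y hy
  obtain ⟨x, hxs, hxV⟩ := mem_iUnion₂.1 (hs hy)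
  obtain ⟨i, hiT, hiU⟩ := mem_iUnion₂.1 (hT x (hsK x hxs) hxV)
  exact mem_iUnion₂.2 ⟨i, Finset.mem_biUnion.2 ⟨x, hxs, hiT⟩, hiU⟩

/-- For a finite geodesic covering `p : M' ↠ M`, the covering space is pseudoconvex
iff the base is pseudoconvex. -/
theorem pseudoconvex_of_finite_geodesic_covering {M' M : Type*} [TopologicalSpace M']
    [TopologicalSpace M] (p : M' → M)
    (G' : GeodesicStructure M') (G : GeodesicStructure M)
    (hcov : IsGeodesicCovering p G' G)
    (hfin : ∀ x : M, (p ⁻¹' {x}).Finite) :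
    G'.Pseudoconvex ↔ G.Pseudoconvex := by
  obtain ⟨hp, hsurj, hproj, hlift⟩ := hcov
  have hpc : Continuous p := hp.continuous
  constructor
  · -- covering space pseudoconvex ⇒ base pseudoconvex
    intro h K hK
    obtain ⟨L', hL', hL'prop⟩ := h (p ⁻¹' K)
      (hp.isCompact_preimage_of_finite_fibers hfin hK)
    refine ⟨p '' L', hL'.image hpc, ?_⟩
    intro γ a b hγ hab ha hb t ht
    obtain ⟨x, hx⟩ := hsurj (γ 0)
    obtain ⟨γ', hγ', hpγ', -⟩ := hlift γ hγ x hx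
    have hmem : ∀ u : ℝ, γ u ∈ K → γ' u ∈ p ⁻¹' K := by
      intro u hu
      simp only [mem_preimage]
      have : p (γ' u) = γ u := congrFun hpγ' u
      rwa [this]
    have := hL'prop γ' a b hγ' hab (hmem a ha) (hmem b hb) t ht
    exact ⟨γ' t, this, congrFun hpγ' t⟩
  · -- base pseudoconvex ⇒ covering space pseudoconvex
    intro h L hL
    obtain ⟨K', hK', hK'prop⟩ := h (p '' L) (hL.image hpc)
    refine ⟨p ⁻¹' K', hp.isCompact_preimage_of_finite_fibers hfin hK', ?_⟩
    intro γ' a b hγ' hab ha hb t ht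
    have : (p ∘ γ') t ∈ K' :=
      hK'prop (p ∘ γ') a b (hproj γ' hγ') hab ⟨γ' a, ha, rfl⟩ ⟨γ' b, hb, rfl⟩ t ht
    exact this
end

section
/- Every pseudohadamard manifold is nonreturning: each point has arbitrarily small convex normal neighborhoods that no geodesic, once it leaves, ever re-enters. -/
open scoped RealInnerProductSpace

lemma line_coeff {n : ℕ} (w y : EuclideanSpace ℝ (Fin n)) (hw : w ≠ 0) (s : ℝ) (hy : y = s • w) :
    y = ((⟪w, y⟫ : ℝ) / (⟪w, w⟫ : ℝ)) • w := by
  subst hy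
  rw [real_inner_smul_right]
  have h0 : (⟪w, w⟫ : ℝ) ≠ 0 := inner_self_ne_zero.mpr hw
  rw [mul_div_assoc, div_self h0, mul_one]

lemma between_of_cont_inj (f : ℝ → ℝ) (hc : Continuous f) (hi : Function.Injective f)
    {t₁ t₂ t₃ : ℝ} (h12 : t₁ ≤ t₂) (h23 : t₂ ≤ t₃) : f t₂ ∈ Set.uIcc (f t₁) (f t₃) := by
  rcases hc.strictMono_of_inj hi with h | h
  · exact Set.mem_uIcc.2 (Or.inl ⟨h.monotone h12, h.monotone h23⟩)
  · exact Set.mem_uIcc.2 (Or.inr ⟨h.antitone h23, h.antitone h12⟩)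


/-- An abstract pseudohadamard manifold `(M,∇)`: at every point `x` the exponential map
`exp x : T_xM ≅ ℝⁿ → M` is a diffeomorphism (here recorded as a homeomorphism, jointly
continuous in both variables, with `exp x 0 = x`); the (complete, inextendible) geodesics
are exactly the curves `t ↦ exp x (t • v)`; a geodesic may be rebased at any of its
points; and (as for any linear connection) each point has arbitrarily small convex
normal neighborhoods, in which any two points are joined by a geodesic segment lying
inside the neighborhood. -/
structure PseudohadamardStructure (n : ℕ) (M : Type*) [TopologicalSpace M] where
  Geo : (ℝ → M) → Prop
  exp : M → (EuclideanSpace ℝ (Fin n) ≃ₜ M)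
  exp_zero : ∀ x, exp x 0 = x
  exp_cont : Continuous fun q : M × EuclideanSpace ℝ (Fin n) => exp q.1 q.2
  exp_symm_cont : Continuous fun q : M × M => (exp q.1).symm q.2
  geo_iff : ∀ γ : ℝ → M, Geo γ ↔ ∃ x v, γ = fun t : ℝ => exp x (t • v)
  rebase : ∀ (x : M) (v : EuclideanSpace ℝ (Fin n)) (s : ℝ),
    ∃ w : EuclideanSpace ℝ (Fin n),
      Set.range (fun t : ℝ => exp x (t • v)) =
        Set.range (fun t : ℝ => exp (exp x (s • v)) (t • w))
  convex_nbhd : ∀ x : M, ∀ V ∈ nhds x, ∃ U ∈ nhds x, IsOpen U ∧ U ⊆ V ∧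
    ∀ p ∈ U, ∀ q ∈ U, ∃ γ a b, Geo γ ∧ a ≤ b ∧ γ a = p ∧ γ b = q ∧
      ∀ t ∈ Set.Icc a b, γ t ∈ U

/-- Every pseudohadamard manifold is nonreturning: each point has arbitrarily small
convex normal neighborhoods that no geodesic, once it leaves, ever re-enters. -/
theorem pseudohadamard_nonreturning {n : ℕ} {M : Type*} [TopologicalSpace M]
    (P : PseudohadamardStructure n M) :
    ∀ x : M, ∀ V ∈ nhds x, ∃ U ∈ nhds x, IsOpen U ∧ U ⊆ V ∧
      (∀ p ∈ U, ∀ q ∈ U, ∃ γ a b, P.Geo γ ∧ a ≤ b ∧ γ a = p ∧ γ b = q ∧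
        ∀ t ∈ Set.Icc a b, γ t ∈ U) ∧
      ∀ γ : ℝ → M, P.Geo γ → ∀ t₁ t₂ t₃ : ℝ, t₁ ≤ t₂ → t₂ ≤ t₃ →
        γ t₁ ∈ U → γ t₂ ∉ U → γ t₃ ∉ U := by
  intro x V hV
  obtain ⟨U, hU, hUo, hUV, hconv⟩ := P.convex_nbhd x V hV
  refine ⟨U, hU, hUo, hUV, hconv, ?_⟩
  intro γ hγ t₁ t₂ t₃ h12 h23 h1 h2 h3
  apply h2
  obtain ⟨x₀, v, hγeq⟩ := (P.geo_iff γ).1 hγ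
  by_cases hv : v = 0
  · have he : γ t₂ = γ t₁ := by simp [hγeq, hv]
    rwa [he]
  set p := γ t₁ with hp
  obtain ⟨w, hw⟩ := P.rebase x₀ v t₁
  have hps : P.exp x₀ (t₁ • v) = p := by rw [hp, hγeq]
  rw [hps] at hw
  have hγmem : ∀ t : ℝ, ∃ s : ℝ, (P.exp p).symm (γ t) = s • w := by
    intro t
    have ht : γ t ∈ Set.range (fun t : ℝ => P.exp p (t • w)) := by
      rw [← hw]; exact ⟨t, by simp [hγeq]⟩
    obtain ⟨s, hs⟩ := ht
    exact ⟨s, by rw [← hs, Homeomorph.symm_apply_apply]⟩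
  have hsymmp : (P.exp p).symm p = 0 := by
    nth_rewrite 2 [← P.exp_zero p]
    exact Homeomorph.symm_apply_apply _ _
  by_cases hwz : w = 0
  · obtain ⟨s, hs⟩ := hγmem t₂
    have he : γ t₂ = p := by
      rw [← Homeomorph.apply_symm_apply (P.exp p) (γ t₂), hs, hwz, smul_zero, P.exp_zero]
    rwa [he]
  set c : ℝ → ℝ := fun t => (⟪w, (P.exp p).symm (γ t)⟫ : ℝ) / (⟪w, w⟫ : ℝ) with hc
  have hγc : ∀ t, γ t = P.exp p (c t • w) := by
    intro t
    obtain ⟨s, hs⟩ := hγmem t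
    have hl := line_coeff w _ hwz s hs
    rw [hc]
    rw [← hl, Homeomorph.apply_symm_apply]
  have hγcont : Continuous γ := by
    rw [hγeq]
    exact (P.exp x₀).continuous.comp (continuous_id.smul continuous_const)
  have hccont : Continuous c :=
    (continuous_const.inner ((P.exp p).symm.continuous.comp hγcont)).div_const _
  have hcinj : Function.Injective c := by
    intro s s' hss
    have hgg : γ s = γ s' := by rw [hγc s, hγc s', hss]
    rw [hγeq] at hgg
    exact smul_left_injective ℝ hv ((P.exp x₀).injective hgg)
  have hc1 : c t₁ = 0 := by
    have : (P.exp p).symm (γ t₁) = 0 := by rw [← hp, hsymmp]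
    simp only [hc, this, inner_zero_right, zero_div]
  have hbet : c t₂ ∈ Set.uIcc (0 : ℝ) (c t₃) := by
    have hb := between_of_cont_inj c hccont hcinj h12 h23
    rwa [hc1] at hb
  obtain ⟨σ, a, b, hσgeo, hab, hσa, hσb, hσU⟩ := hconv p h1 (γ t₃) h3
  obtain ⟨y, u₀, hσeq⟩ := (P.geo_iff σ).1 hσgeo
  obtain ⟨u, hu⟩ := P.rebase y u₀ a
  have hsa : P.exp y (a • u₀) = p := by rw [← hσa, hσeq]
  rw [hsa] at hu
  have hσmem : ∀ t : ℝ, ∃ s : ℝ, (P.exp p).symm (σ t) = s • u := by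
    intro t
    have ht : σ t ∈ Set.range (fun t : ℝ => P.exp p (t • u)) := by
      rw [← hu]; exact ⟨t, by simp [hσeq]⟩
    obtain ⟨s, hs⟩ := ht
    exact ⟨s, by rw [← hs, Homeomorph.symm_apply_apply]⟩
  by_cases huz : u = 0
  · obtain ⟨s, hs⟩ := hσmem b
    have hq : γ t₃ = p := by
      rw [← hσb, ← Homeomorph.apply_symm_apply (P.exp p) (σ b), hs, huz, smul_zero, P.exp_zero]
    have hct3 : c t₃ = 0 := by
      have he : P.exp p (c t₃ • w) = P.exp p 0 := by rw [← hγc, hq, P.exp_zero]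
      have he2 := (P.exp p).injective he
      rcases smul_eq_zero.1 he2 with h | h
      · exact h
      · exact absurd h hwz
    rw [hct3, Set.uIcc_self, Set.mem_singleton_iff] at hbet
    have he : γ t₂ = p := by rw [hγc t₂, hbet, zero_smul, P.exp_zero]
    rwa [he]
  set ψ : ℝ → ℝ := fun t => (⟪u, (P.exp p).symm (σ t)⟫ : ℝ) / (⟪u, u⟫ : ℝ) with hψ
  have hσc : ∀ t, σ t = P.exp p (ψ t • u) := by
    intro t
    obtain ⟨s, hs⟩ := hσmem t
    have hl := line_coeff u _ huz s hs
    rw [hψ]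
    rw [← hl, Homeomorph.apply_symm_apply]
  have hσcont : Continuous σ := by
    rw [hσeq]
    exact (P.exp y).continuous.comp (continuous_id.smul continuous_const)
  have hψcont : Continuous ψ :=
    (continuous_const.inner ((P.exp p).symm.continuous.comp hσcont)).div_const _
  have hψa : ψ a = 0 := by
    have : (P.exp p).symm (σ a) = 0 := by rw [hσa, hsymmp]
    simp only [hψ, this, inner_zero_right, zero_div]
  have hkey : c t₃ • w = ψ b • u := by
    apply (P.exp p).injective
    rw [← hγc, ← hσc, hσb]
  by_cases hct3 : c t₃ = 0
  · rw [hct3, Set.uIcc_self, Set.mem_singleton_iff] at hbet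
    have he : γ t₂ = p := by rw [hγc t₂, hbet, zero_smul, P.exp_zero]
    rwa [he]
  set m : ℝ := c t₂ * ψ b / c t₃ with hm
  have hmu : m • u = c t₂ • w := by
    have h1' : (c t₂ / c t₃) • (ψ b • u) = (c t₂ / c t₃) • (c t₃ • w) := by rw [hkey]
    rw [smul_smul, smul_smul] at h1'
    have e1 : c t₂ / c t₃ * ψ b = m := by rw [hm]; ring
    have e2 : c t₂ / c t₃ * c t₃ = c t₂ := div_mul_cancel₀ _ hct3
    rwa [e1, e2] at h1'
  have hθ0 : 0 ≤ c t₂ / c t₃ := by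
    rcases Set.mem_uIcc.1 hbet with ⟨h0, h1'⟩ | ⟨h0, h1'⟩
    · exact div_nonneg h0 (le_trans h0 h1')
    · exact div_nonneg_of_nonpos h1' (le_trans h0 h1')
  have hθ1 : c t₂ / c t₃ ≤ 1 := by
    rcases Set.mem_uIcc.1 hbet with ⟨h0, h1'⟩ | ⟨h0, h1'⟩
    · have hpos : 0 < c t₃ := lt_of_le_of_ne (le_trans h0 h1') (Ne.symm hct3)
      exact (div_le_one hpos).2 h1'
    · have hneg : c t₃ < 0 := lt_of_le_of_ne (le_trans h0 h1') hct3
      rw [div_le_one_iff]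
      exact Or.inr (Or.inr ⟨hneg, h0⟩)
  have hmm : m = (c t₂ / c t₃) * ψ b := by rw [hm]; ring
  have hmmem : m ∈ Set.uIcc (ψ a) (ψ b) := by
    rw [hψa, Set.mem_uIcc]
    rcases le_total 0 (ψ b) with h | h
    · exact Or.inl ⟨by nlinarith, by nlinarith⟩
    · exact Or.inr ⟨by nlinarith, by nlinarith⟩
  obtain ⟨t, htmem, htval⟩ := intermediate_value_uIcc hψcont.continuousOn hmmem
  rw [Set.uIcc_of_le hab] at htmem
  have he : γ t₂ = σ t := by rw [hγc t₂, hσc t, htval, hmu]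
  rw [he]
  exact hσU t htmem
end
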